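/- Let ((A,φ),(A*,W)) be a generalized Lie bialgebroid over M and let L ⊂ A⊕A* be a maximally isotropic subbundle for (·,·)_+. For all sections X₁+α₁, X₂+α₂ ∈ Γ(L), the bracket ⟦·,·⟧~ of the Courant algebroid Ã⊕Ã* and the bracket ⟦·,·⟧ of the double (A⊕A*,φ+W) satisfy ⟦E(X₁+α₁), E(X₂+α₂)⟧~ = E(⟦X₁+α₁, X₂+α₂⟧). Consequently Γ(L̃)=E(Γ(L)) is closed under ⟦·,·⟧~ if and only if Γ(L) is closed under ⟦·,·⟧. -/

import Mathlib

/-!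
An algebraic formalization of generalized Lie bialgebroids `((A,φ),(A*,W))` over a manifold `M`,
of the associated generalized Courant algebroid (the double `(A ⊕ A*, φ + W)`), and of the
Courant algebroid `Ã ⊕ Ã*` over `M̃ = M × ℝ` attached to the induced Lie bialgebroid
`(Ã, Ã*) = (A × ℝ, A* × ℝ)`.

The manifold `M` is encoded through its commutative ℝ-algebra `R` of smooth functions,
`M̃ = M × ℝ` through a commutative ℝ-algebra `R'` (containing `R` via `ι_R = π₁^*`, the
function `e^t`, and the derivation `∂/∂t`), and the vector bundles `A`, `A*`, `Ã`, `Ã*`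
through the modules `A`, `B`, `At`, `Bt` of their (global) sections.  Vector fields are
encoded as derivations of the function algebras.
-/

noncomputable section

/-- A Lie algebroid structure on an `R`-module `A` (`R` = functions on the base):
an ℝ-bilinear Lie bracket on sections together with an anchor map into vector fields
(derivations of `R`), satisfying the Leibniz rule; the anchor is a morphism of brackets. -/
structure LieAlgebroidStr (R : Type*) [CommRing R] [Algebra ℝ R]
    (A : Type*) [AddCommGroup A] [Module ℝ A] [Module R A] [IsScalarTower ℝ R A] where
  br : A → A → A
  br_add_left : ∀ X Y Z, br (X + Y) Z = br X Z + br Y Z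
  br_smul_left : ∀ (c : ℝ) (X Y : A), br (c • X) Y = c • br X Y
  br_antisymm : ∀ X Y, br X Y = - br Y X
  br_jacobi : ∀ X Y Z, br X (br Y Z) = br (br X Y) Z + br Y (br X Z)
  anchor : A →ₗ[R] Derivation ℝ R R
  br_leibniz : ∀ (X : A) (f : R) (Y : A), br X (f • Y) = f • br X Y + anchor X f • Y
  anchor_br : ∀ X Y, anchor (br X Y) = ⁅anchor X, anchor Y⁆

/-- All the data of a generalized Lie bialgebroid `((A,φ),(A*,W))` over `M` together with
the induced Lie bialgebroid `(Ã,Ã*)` over `M̃ = M × ℝ`.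

* `la`, `laStar` : the Lie algebroid structures `([·,·],a)` on `A` and `([·,·]_*,a_*)` on `A* = B`;
* `pair` : the (nondegenerate) duality pairing `⟨α,X⟩` between `A*` and `A`;
* `phi`, `w` : the 1-cocycles `φ ∈ Γ(A*)`, `W ∈ Γ(A)`;
* `dd`, `ddStar` : the Lie algebroid differentials `d`, `d_*` on functions;
* `colie` : the Lie derivative `L_Y α` of `A`-forms;
* `iDphi`, `iDw` : the contractions `i_X (d^φ α)` and `i_α (d_*^W X)`
  (so that `L^φ_X α = d^φ⟨α,X⟩ + i_X(d^φ α)` and `L_{*α}^W X = d_*^W⟨α,X⟩ + i_α(d_*^W X)`);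
* `compat_deg1_bracket` : the generalized Lie bialgebroid condition
  `d_*^W [X,Y] = [d_*^W X, Y]^φ + [X, d_*^W Y]^φ`, with both sides (bivectors) evaluated on a
  pair of sections `(α,β)` of `A*`, using `[P,Y]^φ = -L_Y P + ⟨φ,Y⟩P` and
  `[X,Q]^φ = L_X Q - ⟨φ,X⟩Q` for bivectors `P`, `Q`;
* `compat_deg0`, `compat_deg1` : the generalized Lie bialgebroid condition
  `L_{*φ}^W P + L_W^φ P = 0` for multisections `P` of degree `0` and `1` (which generate);
* `iota` (= `π₁^* : C^∞(M) → C^∞(M×ℝ)`), `expT` (= `e^t`), `expNT` (= `e^{-t}`),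
  `ddt` (= `∂/∂t`) : the ambient data of `M̃ = M × ℝ`;
* `iotaA`, `iotaB` : the inclusions of sections of `A`, `A*` as time-independent sections of
  `Ã = A × ℝ`, `Ã* = A* × ℝ`; `genA`, `genB` : time-dependent sections are generated by these;
* `extA`, `extB` : the time-independent extensions `ã(X)`, `ã_*(α)` of vector fields on `M`
  to `M × ℝ`;
* `laT` : the Lie algebroid structure `([·,·]^~φ, ã^φ)` on `Ã`, with
  `ã^φ(X) = ã(X) + ⟨φ,X⟩ ∂/∂t` on time-independent sections;
* `laTStar` : the Lie algebroid structure `([·,·]^^W_*, â_*^W)` on `Ã*`, with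
  `[α,β]^^W_* = e^{-t}([α,β]_* + ⟨W,α⟩(∂β/∂t - β) - ⟨W,β⟩(∂α/∂t - α))` and
  `â_*^W(α) = e^{-t}(ã_*(α) + ⟨W,α⟩ ∂/∂t)` on time-independent sections;
* `dT`, `dTStar` : the differentials `d̃^φ`, `d̂_*^W` on functions of the Lie algebroids
  `laT`, `laTStar` (`d̃^φ f̃ = d̃ f̃ + (∂f̃/∂t) φ` and `d̂_*^W f̃ = e^{-t}(d̃_* f̃ + (∂f̃/∂t) W)`);
* `iDT`, `iDTStar` : the corresponding contractions with the differential of a section,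
  used to form the Lie derivatives entering the Courant bracket of `(Ã, Ã*)`. -/
structure Setup (R R' A B At Bt : Type*)
    [CommRing R] [Algebra ℝ R] [CommRing R'] [Algebra ℝ R']
    [AddCommGroup A] [Module ℝ A] [Module R A] [IsScalarTower ℝ R A]
    [AddCommGroup B] [Module ℝ B] [Module R B] [IsScalarTower ℝ R B]
    [AddCommGroup At] [Module ℝ At] [Module R' At] [IsScalarTower ℝ R' At]
    [AddCommGroup Bt] [Module ℝ Bt] [Module R' Bt] [IsScalarTower ℝ R' Bt] where
  la : LieAlgebroidStr R A
  laStar : LieAlgebroidStr R B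
  pair : B →ₗ[R] A →ₗ[R] R
  pair_nd_left : ∀ α, (∀ X, pair α X = 0) → α = 0
  pair_nd_right : ∀ X, (∀ α, pair α X = 0) → X = 0
  phi : B
  w : A
  phi_cocycle : ∀ X Y, pair phi (la.br X Y)
      = la.anchor X (pair phi Y) - la.anchor Y (pair phi X)
  w_cocycle : ∀ α β, pair (laStar.br α β) w
      = laStar.anchor α (pair β w) - laStar.anchor β (pair α w)
  dd : R →ₗ[ℝ] B
  dd_spec : ∀ f X, pair (dd f) X = la.anchor X f
  ddStar : R →ₗ[ℝ] A
  ddStar_spec : ∀ f α, pair α (ddStar f) = laStar.anchor α f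
  colie : A → B → B
  colie_spec : ∀ Y α Z, pair (colie Y α) Z = la.anchor Y (pair α Z) - pair α (la.br Y Z)
  iDphi : B → A → B
  iDphi_spec : ∀ α X Y, pair (iDphi α X) Y =
    la.anchor X (pair α Y) - la.anchor Y (pair α X) - pair α (la.br X Y)
      + pair phi X * pair α Y - pair phi Y * pair α X
  iDw : A → B → A
  iDw_spec : ∀ X α β, pair β (iDw X α) =
    laStar.anchor α (pair β X) - laStar.anchor β (pair α X) - pair (laStar.br α β) X
      + pair α w * pair β X - pair β w * pair α X
  compat_deg1_bracket : ∀ X Y α β,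
    (fun (Z : A) (γ δ : B) =>
        laStar.anchor γ (pair δ Z) - laStar.anchor δ (pair γ Z) - pair (laStar.br γ δ) Z
          + pair γ w * pair δ Z - pair δ w * pair γ Z) (la.br X Y) α β
    = (la.anchor X ((fun Z γ δ => laStar.anchor γ (pair δ Z) - laStar.anchor δ (pair γ Z)
          - pair (laStar.br γ δ) Z + pair γ w * pair δ Z - pair δ w * pair γ Z) Y α β)
        - (fun Z γ δ => laStar.anchor γ (pair δ Z) - laStar.anchor δ (pair γ Z)
          - pair (laStar.br γ δ) Z + pair γ w * pair δ Z - pair δ w * pair γ Z) Y (colie X α) β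
        - (fun Z γ δ => laStar.anchor γ (pair δ Z) - laStar.anchor δ (pair γ Z)
          - pair (laStar.br γ δ) Z + pair γ w * pair δ Z - pair δ w * pair γ Z) Y α (colie X β)
        - pair phi X * (fun Z γ δ => laStar.anchor γ (pair δ Z) - laStar.anchor δ (pair γ Z)
          - pair (laStar.br γ δ) Z + pair γ w * pair δ Z - pair δ w * pair γ Z) Y α β)
      - (la.anchor Y ((fun Z γ δ => laStar.anchor γ (pair δ Z) - laStar.anchor δ (pair γ Z)
          - pair (laStar.br γ δ) Z + pair γ w * pair δ Z - pair δ w * pair γ Z) X α β)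
        - (fun Z γ δ => laStar.anchor γ (pair δ Z) - laStar.anchor δ (pair γ Z)
          - pair (laStar.br γ δ) Z + pair γ w * pair δ Z - pair δ w * pair γ Z) X (colie Y α) β
        - (fun Z γ δ => laStar.anchor γ (pair δ Z) - laStar.anchor δ (pair γ Z)
          - pair (laStar.br γ δ) Z + pair γ w * pair δ Z - pair δ w * pair γ Z) X α (colie Y β))
      + pair phi Y * (fun Z γ δ => laStar.anchor γ (pair δ Z) - laStar.anchor δ (pair γ Z)
          - pair (laStar.br γ δ) Z + pair γ w * pair δ Z - pair δ w * pair γ Z) X α β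
  compat_deg0 : ∀ f : R, laStar.anchor phi f + la.anchor w f + 2 * pair phi w * f = 0
  compat_deg1 : ∀ X : A,
    ddStar (pair phi X) + pair phi X • w + iDw X phi + la.br w X = 0
  -- the ambient data of `M̃ = M × ℝ`
  iota : R →ₐ[ℝ] R'
  iota_inj : Function.Injective iota
  expT : R'
  expNT : R'
  exp_mul : expT * expNT = 1
  ddt : Derivation ℝ R' R'
  ddt_iota : ∀ f, ddt (iota f) = 0
  ddt_expT : ddt expT = expT
  iotaA : A →+ At
  iotaA_smul : ∀ (f : R) (X : A), iotaA (f • X) = iota f • iotaA X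
  iotaA_inj : Function.Injective iotaA
  iotaB : B →+ Bt
  iotaB_smul : ∀ (f : R) (α : B), iotaB (f • α) = iota f • iotaB α
  iotaB_inj : Function.Injective iotaB
  pairT : Bt →ₗ[R'] At →ₗ[R'] R'
  pairT_nd_left : ∀ α, (∀ X, pairT α X = 0) → α = 0
  pairT_nd_right : ∀ X, (∀ α, pairT α X = 0) → X = 0
  pairT_iota : ∀ α X, pairT (iotaB α) (iotaA X) = iota (pair α X)
  genA : Submodule.span R' (Set.range iotaA) = ⊤
  genB : Submodule.span R' (Set.range iotaB) = ⊤
  extA : A → Derivation ℝ R' R'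
  extA_iota : ∀ X f, extA X (iota f) = iota (la.anchor X f)
  extA_expT : ∀ X, extA X expT = 0
  extB : B → Derivation ℝ R' R'
  extB_iota : ∀ α f, extB α (iota f) = iota (laStar.anchor α f)
  extB_expT : ∀ α, extB α expT = 0
  laT : LieAlgebroidStr R' At
  laTStar : LieAlgebroidStr R' Bt
  laT_br_iota : ∀ X Y, laT.br (iotaA X) (iotaA Y) = iotaA (la.br X Y)
  laT_anchor_iota : ∀ X, laT.anchor (iotaA X) = extA X + iota (pair phi X) • ddt
  laTStar_br_iota : ∀ α β, laTStar.br (iotaB α) (iotaB β) =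
    expNT • ((iotaB (laStar.br α β) : Bt)
      + iota (pair β w) • iotaB α - iota (pair α w) • iotaB β)
  laTStar_anchor_iota : ∀ α, laTStar.anchor (iotaB α) =
    expNT • (extB α + iota (pair α w) • ddt)
  dT : R' →ₗ[ℝ] Bt
  dT_spec : ∀ f' X', pairT (dT f') X' = laT.anchor X' f'
  dTStar : R' →ₗ[ℝ] At
  dTStar_spec : ∀ f' α', pairT α' (dTStar f') = laTStar.anchor α' f'
  iDT : Bt → At → Bt
  iDT_spec : ∀ α' X' Y', pairT (iDT α' X') Y' =
    laT.anchor X' (pairT α' Y') - laT.anchor Y' (pairT α' X') - pairT α' (laT.br X' Y')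
  iDTStar : At → Bt → At
  iDTStar_spec : ∀ X' α' β', pairT β' (iDTStar X' α') =
    laTStar.anchor α' (pairT β' X') - laTStar.anchor β' (pairT α' X')
      - pairT (laTStar.br α' β') X'

namespace Setup

variable {R R' A B At Bt : Type*}
    [CommRing R] [Algebra ℝ R] [CommRing R'] [Algebra ℝ R']
    [AddCommGroup A] [Module ℝ A] [Module R A] [IsScalarTower ℝ R A]
    [AddCommGroup B] [Module ℝ B] [Module R B] [IsScalarTower ℝ R B]
    [AddCommGroup At] [Module ℝ At] [Module R' At] [IsScalarTower ℝ R' At]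
    [AddCommGroup Bt] [Module ℝ Bt] [Module R' Bt] [IsScalarTower ℝ R' Bt]
    (S : Setup R R' A B At Bt)

/-- The `φ`-differential on functions: `d^φ f = d f + f φ`. -/
def dphiF (f : R) : B := S.dd f + f • S.phi

/-- The `W`-differential on functions: `d_*^W f = d_* f + f W`. -/
def dwF (f : R) : A := S.ddStar f + f • S.w

/-- The `φ`-Lie derivative `L^φ_X α = d^φ⟨α,X⟩ + i_X (d^φ α)` of a section of `A*`. -/
def lphi (X : A) (α : B) : B := S.dphiF (S.pair α X) + S.iDphi α X

/-- The `W`-Lie derivative `L_{*α}^W X = d_*^W⟨α,X⟩ + i_α (d_*^W X)` of a section of `A`. -/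
def lw (α : B) (X : A) : A := S.dwF (S.pair α X) + S.iDw X α

/-- The skew-symmetric pairing `(e₁, e₂)_- = ½(⟨α₁,X₂⟩ - ⟨α₂,X₁⟩)` on `A ⊕ A*`. -/
def minusPair (e₁ e₂ : A × B) : R :=
  algebraMap ℝ R (1 / 2) * (S.pair e₁.2 e₂.1 - S.pair e₂.2 e₁.1)

/-- The symmetric pairing `(e₁, e₂)_+ = ½(⟨α₁,X₂⟩ + ⟨α₂,X₁⟩)` on `A ⊕ A*`. -/
def plusPair (e₁ e₂ : A × B) : R :=
  algebraMap ℝ R (1 / 2) * (S.pair e₁.2 e₂.1 + S.pair e₂.2 e₁.1)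

/-- The bracket `⟦·,·⟧` on sections of the double `A ⊕ A*` of the generalized Lie
bialgebroid `((A,φ),(A*,W))`:
`⟦X₁+α₁, X₂+α₂⟧ = ([X₁,X₂]^φ + L_{*α₁}^W X₂ - L_{*α₂}^W X₁ - d_*^W (e₁,e₂)_-)`
`+ ([α₁,α₂]_*^W + L^φ_{X₁} α₂ - L^φ_{X₂} α₁ + d^φ (e₁,e₂)_-)`. -/
def brC (e₁ e₂ : A × B) : A × B :=
  (S.la.br e₁.1 e₂.1 + S.lw e₁.2 e₂.1 - S.lw e₂.2 e₁.1 - S.dwF (S.minusPair e₁ e₂),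
   S.laStar.br e₁.2 e₂.2 + S.lphi e₁.1 e₂.2 - S.lphi e₂.1 e₁.2 + S.dphiF (S.minusPair e₁ e₂))

/-- The Lie derivative `L̃^φ_{X̃} α̃ = d̃^φ⟨α̃,X̃⟩ + i_X̃ (d̃^φ α̃)` on sections of `Ã*`. -/
def lphiT (X' : At) (α' : Bt) : Bt := S.dT (S.pairT α' X') + S.iDT α' X'

/-- The Lie derivative `L̂_{α̃}^W X̃ = d̂_*^W⟨α̃,X̃⟩ + i_α̃ (d̂_*^W X̃)` on sections of `Ã`. -/
def lwT (α' : Bt) (X' : At) : At := S.dTStar (S.pairT α' X') + S.iDTStar X' α'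

/-- The skew-symmetric pairing `(·,·)_-` on `Ã ⊕ Ã*`. -/
def minusPairT (e₁ e₂ : At × Bt) : R' :=
  algebraMap ℝ R' (1 / 2) * (S.pairT e₁.2 e₂.1 - S.pairT e₂.2 e₁.1)

/-- The symmetric pairing `(·,·)_+` on `Ã ⊕ Ã*`. -/
def plusPairT (e₁ e₂ : At × Bt) : R' :=
  algebraMap ℝ R' (1 / 2) * (S.pairT e₁.2 e₂.1 + S.pairT e₂.2 e₁.1)

/-- The Courant bracket `⟦·,·⟧~` on sections of `Ã ⊕ Ã*` associated with the Lie
bialgebroid `(Ã, Ã*)`. -/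
def brCT (e₁ e₂ : At × Bt) : At × Bt :=
  (S.laT.br e₁.1 e₂.1 + S.lwT e₁.2 e₂.1 - S.lwT e₂.2 e₁.1 - S.dTStar (S.minusPairT e₁ e₂),
   S.laTStar.br e₁.2 e₂.2 + S.lphiT e₁.1 e₂.2 - S.lphiT e₂.1 e₁.2 + S.dT (S.minusPairT e₁ e₂))

/-- The embedding `E : Γ(A ⊕ A*) → Γ(Ã ⊕ Ã*)`, `E(X + α) = X + e^t α`. -/
def emb (e : A × B) : At × Bt := (S.iotaA e.1, S.expT • (S.iotaB e.2 : Bt))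

/-- The subbundle `L̃ = E(L)` of `Ã ⊕ Ã*` associated with a subbundle `L ⊆ A ⊕ A*`: its
space of sections is spanned (over the functions on `M × ℝ`) by the image of `Γ(L)`
under the embedding `E`. -/
def tildeSub (L : Submodule R (A × B)) : Submodule R' (At × Bt) :=
  Submodule.span R' (S.emb '' (L : Set (A × B)))

/-- A subbundle `L ⊆ A ⊕ A*` is isotropic when the symmetric pairing `(·,·)_+`
vanishes on it. -/
def IsIsotropic (L : Submodule R (A × B)) : Prop :=
  ∀ e₁ ∈ L, ∀ e₂ ∈ L, S.plusPair e₁ e₂ = 0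

/-- A subbundle `L ⊆ A ⊕ A*` is maximally isotropic when it is isotropic and maximal
among isotropic subbundles. -/
def IsMaxIsotropic (L : Submodule R (A × B)) : Prop :=
  S.IsIsotropic L ∧ ∀ L' : Submodule R (A × B), S.IsIsotropic L' → L ≤ L' → L' = L

/-- Isotropy in `Ã ⊕ Ã*`. -/
def IsIsotropicT (Lt : Submodule R' (At × Bt)) : Prop :=
  ∀ e₁ ∈ Lt, ∀ e₂ ∈ Lt, S.plusPairT e₁ e₂ = 0

/-- Maximal isotropy in `Ã ⊕ Ã*`. -/
def IsMaxIsotropicT (Lt : Submodule R' (At × Bt)) : Prop :=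
  S.IsIsotropicT Lt ∧ ∀ Lt' : Submodule R' (At × Bt), S.IsIsotropicT Lt' → Lt ≤ Lt' → Lt' = Lt

/-- A Dirac structure for the generalized Courant algebroid `(A ⊕ A*, φ + W)`: a maximally
isotropic subbundle whose sections are closed under the bracket `⟦·,·⟧`. -/
def IsDirac (L : Submodule R (A × B)) : Prop :=
  S.IsMaxIsotropic L ∧ ∀ e₁ ∈ L, ∀ e₂ ∈ L, S.brC e₁ e₂ ∈ L

/-- A Dirac structure for the Courant algebroid `Ã ⊕ Ã*`: a maximally isotropic subbundle
whose sections are closed under the bracket `⟦·,·⟧~`. -/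
def IsDiracT (Lt : Submodule R' (At × Bt)) : Prop :=
  S.IsMaxIsotropicT Lt ∧ ∀ e₁ ∈ Lt, ∀ e₂ ∈ Lt, S.brCT e₁ e₂ ∈ Lt

/-- The set `C_L^∞(M)` of `L`-admissible functions: `f` such that `Y_f + d^φ f ∈ Γ(L)`
for some `Y_f ∈ Γ(A)`. -/
def adm (L : Submodule R (A × B)) : Set R := {f | ∃ Y : A, (Y, S.dphiF f) ∈ L}

/-- The set `C_L̃^∞(M̃)` of `L̃`-admissible functions: `f̃` such that `Ỹ + d̃^φ f̃ ∈ Γ(L̃)`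
for some `Ỹ ∈ Γ(Ã)`. -/
def admT (Lt : Submodule R' (At × Bt)) : Set R' := {f' | ∃ Y' : At, (Y', S.dT f') ∈ Lt}

open Classical in
/-- The bracket `{f,g}_L = ρ^θ(e_f) g` on `L`-admissible functions, where
`e_f = Y_f + d^φ f ∈ Γ(L)` and `ρ^θ(e) = ρ(e) + ⟨θ, e⟩` with `θ = φ + W`
(the value is `0` on non-admissible functions). -/
noncomputable def jbr (L : Submodule R (A × B)) (f g : R) : R :=
  if h : ∃ Y : A, (Y, S.dphiF f) ∈ L then
    S.la.anchor h.choose g + S.laStar.anchor (S.dphiF f) g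
      + (S.pair S.phi h.choose + S.pair (S.dphiF f) S.w) * g
  else 0

open Classical in
/-- The bracket `{f̃,g̃}_L̃ = ρ̃(ẽ_f̃) g̃` on `L̃`-admissible functions, where
`ẽ_f̃ = Ỹ + d̃^φ f̃ ∈ Γ(L̃)` and `ρ̃ = ã^φ + â_*^W`
(the value is `0` on non-admissible functions). -/
noncomputable def jbrT (Lt : Submodule R' (At × Bt)) (f' g' : R') : R' :=
  if h : ∃ Y' : At, (Y', S.dT f') ∈ Lt then
    S.laT.anchor h.choose g' + S.laTStar.anchor (S.dT f') g'
  else 0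

end Setup

/-!
On time-independent sections the anchors of `Ã` and `Ã*` are those of `A` and `A*` twisted
by `⟨φ,·⟩ ∂/∂t` and `⟨·,W⟩ ∂/∂t`, and `∂/∂t e^t = e^t`; the factor `e^t` in `E` is exactly what
turns these twists into the `φ`- and `W`-terms of the double. Hence every ingredient of
`⟦E e₁, E e₂⟧~` (brackets, differentials, Lie derivatives, the pairing `(·,·)_-`) is `E` of
the corresponding ingredient of `⟦e₁, e₂⟧`; each identity is checked by pairing with the
generators `ι_A Z`, `ι_B β`.

For the equivalence: `Γ(L̃)` is the span of `E(Γ(L))`, it is isotropic because `E` multiplies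
`(·,·)_+` by `e^t`, and the Courant bracket obeys Leibniz rules whose defect is a multiple of
`(·,·)_+`, so closure on generators propagates to the span. Conversely, `E⁻¹(Γ(L̃))` is an
isotropic submodule containing `L`, hence equal to `L` by maximality.
-/

namespace LieAlgebroidStr

variable {R A : Type*} [CommRing R] [Algebra ℝ R]
    [AddCommGroup A] [Module ℝ A] [Module R A] [IsScalarTower ℝ R A]
    (la : LieAlgebroidStr R A)

lemma br_add_right (X Y Z : A) : la.br X (Y + Z) = la.br X Y + la.br X Z := by
  rw [la.br_antisymm, la.br_add_left, la.br_antisymm Y X, la.br_antisymm Z X]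
  abel

lemma br_leibniz_left (f : R) (X Y : A) :
    la.br (f • X) Y = f • la.br X Y - la.anchor Y f • X := by
  rw [la.br_antisymm, la.br_leibniz, la.br_antisymm Y X]
  module

end LieAlgebroidStr

namespace Setup

variable {R R' A B At Bt : Type*}
    [CommRing R] [Algebra ℝ R] [CommRing R'] [Algebra ℝ R']
    [AddCommGroup A] [Module ℝ A] [Module R A] [IsScalarTower ℝ R A]
    [AddCommGroup B] [Module ℝ B] [Module R B] [IsScalarTower ℝ R B]
    [AddCommGroup At] [Module ℝ At] [Module R' At] [IsScalarTower ℝ R' At]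
    [AddCommGroup Bt] [Module ℝ Bt] [Module R' Bt] [IsScalarTower ℝ R' Bt]
    (S : Setup R R' A B At Bt)

section Calculus

lemma pairT_injective : Function.Injective S.pairT := fun x y h =>
  sub_eq_zero.mp <| S.pairT_nd_left _ fun X' => by simp [h]

lemma pairT_flip_injective : Function.Injective S.pairT.flip := fun X' Y' h =>
  sub_eq_zero.mp <| S.pairT_nd_right _ fun α' => by
    simpa [sub_eq_zero] using LinearMap.congr_fun h α'

lemma eq_of_pairT_left {α' β' : Bt} (h : ∀ X', S.pairT α' X' = S.pairT β' X') : α' = β' :=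
  S.pairT_injective (LinearMap.ext h)

lemma eq_of_pairT_right {X' Y' : At} (h : ∀ α', S.pairT α' X' = S.pairT α' Y') : X' = Y' :=
  S.pairT_flip_injective (LinearMap.ext h)

lemma eq_of_pairT_iotaA {x y : Bt} (h : ∀ Z, S.pairT x (S.iotaA Z) = S.pairT y (S.iotaA Z)) :
    x = y :=
  S.pairT_injective (LinearMap.ext_on_range S.genA h)

lemma eq_of_pairT_iotaB {X' Y' : At}
    (h : ∀ β, S.pairT (S.iotaB β) X' = S.pairT (S.iotaB β) Y') : X' = Y' :=
  S.pairT_flip_injective (LinearMap.ext_on_range S.genB h)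

lemma pairT_smul_left (f : R') (α' : Bt) (X' : At) :
    S.pairT (f • α') X' = f * S.pairT α' X' := by
  rw [map_smul, LinearMap.smul_apply, smul_eq_mul]

lemma pairT_smul_right (f : R') (α' : Bt) (X' : At) :
    S.pairT α' (f • X') = f * S.pairT α' X' := by
  rw [map_smul, smul_eq_mul]

lemma dT_mul (f g : R') : S.dT (f * g) = f • S.dT g + g • S.dT f := by
  refine S.eq_of_pairT_left fun X' => ?_
  simp only [map_add, LinearMap.add_apply, S.pairT_smul_left, S.dT_spec, Derivation.leibniz,
    smul_eq_mul]

lemma dTStar_mul (f g : R') : S.dTStar (f * g) = f • S.dTStar g + g • S.dTStar f := by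
  refine S.eq_of_pairT_right fun α' => ?_
  simp only [map_add, S.pairT_smul_right, S.dTStar_spec,
    Derivation.leibniz, smul_eq_mul]

lemma iDT_add_left (α' β' : Bt) (X' : At) : S.iDT (α' + β') X' = S.iDT α' X' + S.iDT β' X' := by
  refine S.eq_of_pairT_left fun Y' => ?_
  simp only [S.iDT_spec, map_add, LinearMap.add_apply]
  ring

lemma iDT_add_right (α' : Bt) (X' Y' : At) :
    S.iDT α' (X' + Y') = S.iDT α' X' + S.iDT α' Y' := by
  refine S.eq_of_pairT_left fun Z' => ?_
  simp only [S.iDT_spec, map_add, LinearMap.add_apply, S.laT.br_add_left, Derivation.add_apply]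
  ring

lemma iDT_smul_left (f : R') (α' : Bt) (X' : At) :
    S.iDT (f • α') X' = f • S.iDT α' X' + S.laT.anchor X' f • α' - S.pairT α' X' • S.dT f := by
  refine S.eq_of_pairT_left fun Y' => ?_
  simp only [map_add, map_sub, LinearMap.add_apply, LinearMap.sub_apply, S.iDT_spec,
    S.pairT_smul_left, Derivation.leibniz, smul_eq_mul, S.dT_spec]
  ring

lemma iDT_smul_right (f : R') (α' : Bt) (X' : At) : S.iDT α' (f • X') = f • S.iDT α' X' := by
  refine S.eq_of_pairT_left fun Y' => ?_
  simp only [S.iDT_spec, S.pairT_smul_right, map_smul, map_sub, LinearMap.smul_apply,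
    Derivation.smul_apply, Derivation.leibniz, smul_eq_mul, S.laT.br_leibniz_left]
  ring

lemma iDTStar_add_left (X' Y' : At) (α' : Bt) :
    S.iDTStar (X' + Y') α' = S.iDTStar X' α' + S.iDTStar Y' α' := by
  refine S.eq_of_pairT_right fun β' => ?_
  simp only [S.iDTStar_spec, map_add]
  ring

lemma iDTStar_add_right (X' : At) (α' β' : Bt) :
    S.iDTStar X' (α' + β') = S.iDTStar X' α' + S.iDTStar X' β' := by
  refine S.eq_of_pairT_right fun γ' => ?_
  simp only [S.iDTStar_spec, map_add, LinearMap.add_apply, S.laTStar.br_add_left,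
    Derivation.add_apply]
  ring

lemma iDTStar_smul_left (f : R') (X' : At) (α' : Bt) :
    S.iDTStar (f • X') α'
      = f • S.iDTStar X' α' + S.laTStar.anchor α' f • X' - S.pairT α' X' • S.dTStar f := by
  refine S.eq_of_pairT_right fun β' => ?_
  simp only [map_add, map_sub, S.iDTStar_spec, S.pairT_smul_right, Derivation.leibniz,
    smul_eq_mul, S.dTStar_spec]
  ring

lemma iDTStar_smul_right (f : R') (X' : At) (α' : Bt) :
    S.iDTStar X' (f • α') = f • S.iDTStar X' α' := by
  refine S.eq_of_pairT_right fun β' => ?_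
  simp only [S.iDTStar_spec, S.pairT_smul_right, map_smul, map_sub, LinearMap.sub_apply,
    LinearMap.smul_apply, Derivation.smul_apply, Derivation.leibniz, smul_eq_mul,
    S.laTStar.br_leibniz_left]
  ring

lemma lphiT_add_left (X' Y' : At) (α' : Bt) :
    S.lphiT (X' + Y') α' = S.lphiT X' α' + S.lphiT Y' α' := by
  rw [lphiT, lphiT, lphiT, map_add, map_add, S.iDT_add_right]
  abel

lemma lphiT_add_right (X' : At) (α' β' : Bt) :
    S.lphiT X' (α' + β') = S.lphiT X' α' + S.lphiT X' β' := by
  rw [lphiT, lphiT, lphiT, map_add, LinearMap.add_apply, map_add, S.iDT_add_left]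
  abel

lemma lphiT_smul_left (f : R') (X' : At) (α' : Bt) :
    S.lphiT (f • X') α' = f • S.lphiT X' α' + S.pairT α' X' • S.dT f := by
  rw [lphiT, lphiT, S.pairT_smul_right, S.dT_mul, S.iDT_smul_right]
  module

lemma lphiT_smul_right (f : R') (X' : At) (α' : Bt) :
    S.lphiT X' (f • α') = f • S.lphiT X' α' + S.laT.anchor X' f • α' := by
  rw [lphiT, lphiT, S.pairT_smul_left, S.dT_mul, S.iDT_smul_left]
  module

lemma lwT_add_left (α' β' : Bt) (X' : At) :
    S.lwT (α' + β') X' = S.lwT α' X' + S.lwT β' X' := by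
  rw [lwT, lwT, lwT, map_add, LinearMap.add_apply, map_add, S.iDTStar_add_right]
  abel

lemma lwT_add_right (α' : Bt) (X' Y' : At) :
    S.lwT α' (X' + Y') = S.lwT α' X' + S.lwT α' Y' := by
  rw [lwT, lwT, lwT, map_add, map_add, S.iDTStar_add_left]
  abel

lemma lwT_smul_left (f : R') (α' : Bt) (X' : At) :
    S.lwT (f • α') X' = f • S.lwT α' X' + S.pairT α' X' • S.dTStar f := by
  rw [lwT, lwT, S.pairT_smul_left, S.dTStar_mul, S.iDTStar_smul_right]
  module

lemma lwT_smul_right (f : R') (α' : Bt) (X' : At) :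
    S.lwT α' (f • X') = f • S.lwT α' X' + S.laTStar.anchor α' f • X' := by
  rw [lwT, lwT, S.pairT_smul_right, S.dTStar_mul, S.iDTStar_smul_left]
  module

end Calculus

section CourantBracket

lemma minusPairT_swap (e₁ e₂ : At × Bt) : S.minusPairT e₂ e₁ = - S.minusPairT e₁ e₂ := by
  rw [minusPairT, minusPairT]
  ring

lemma plusPairT_comm (e₁ e₂ : At × Bt) : S.plusPairT e₂ e₁ = S.plusPairT e₁ e₂ := by
  rw [plusPairT, plusPairT]
  ring

lemma minusPairT_add_right (e₁ e₂ e₃ : At × Bt) :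
    S.minusPairT e₁ (e₂ + e₃) = S.minusPairT e₁ e₂ + S.minusPairT e₁ e₃ := by
  simp only [minusPairT, Prod.fst_add, Prod.snd_add, map_add, LinearMap.add_apply]
  ring

lemma minusPairT_smul_right (f : R') (e₁ e₂ : At × Bt) :
    S.minusPairT e₁ (f • e₂) = f * S.minusPairT e₁ e₂ := by
  simp only [minusPairT, Prod.smul_fst, Prod.smul_snd, S.pairT_smul_left, S.pairT_smul_right]
  ring

lemma plusPairT_add_right (e₁ e₂ e₃ : At × Bt) :
    S.plusPairT e₁ (e₂ + e₃) = S.plusPairT e₁ e₂ + S.plusPairT e₁ e₃ := by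
  simp only [plusPairT, Prod.fst_add, Prod.snd_add, map_add, LinearMap.add_apply]
  ring

lemma plusPairT_smul_right (f : R') (e₁ e₂ : At × Bt) :
    S.plusPairT e₁ (f • e₂) = f * S.plusPairT e₁ e₂ := by
  simp only [plusPairT, Prod.smul_fst, Prod.smul_snd, S.pairT_smul_left, S.pairT_smul_right]
  ring

lemma plusPairT_add_left (e₁ e₂ e₃ : At × Bt) :
    S.plusPairT (e₁ + e₂) e₃ = S.plusPairT e₁ e₃ + S.plusPairT e₂ e₃ := by
  rw [S.plusPairT_comm, S.plusPairT_add_right, S.plusPairT_comm e₃ e₁, S.plusPairT_comm e₃ e₂]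

lemma plusPairT_smul_left (f : R') (e₁ e₂ : At × Bt) :
    S.plusPairT (f • e₁) e₂ = f * S.plusPairT e₁ e₂ := by
  rw [S.plusPairT_comm, S.plusPairT_smul_right, S.plusPairT_comm e₂ e₁]

lemma plusPairT_eq_pairT_add_minusPairT (e₁ e₂ : At × Bt) :
    S.plusPairT e₁ e₂ = S.pairT e₂.2 e₁.1 + S.minusPairT e₁ e₂ := by
  have half : algebraMap ℝ R' (1 / 2) + algebraMap ℝ R' (1 / 2) = 1 := by
    rw [← map_add, add_halves, map_one]
  rw [plusPairT, minusPairT]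
  linear_combination S.pairT e₂.2 e₁.1 * half

lemma plusPairT_eq_pairT_sub_minusPairT (e₁ e₂ : At × Bt) :
    S.plusPairT e₁ e₂ = S.pairT e₁.2 e₂.1 - S.minusPairT e₁ e₂ := by
  rw [← S.plusPairT_comm, S.plusPairT_eq_pairT_add_minusPairT, S.minusPairT_swap, sub_eq_add_neg]

lemma brCT_antisymm (e₁ e₂ : At × Bt) : S.brCT e₁ e₂ = - S.brCT e₂ e₁ := by
  simp only [brCT, Prod.neg_mk, S.laT.br_antisymm e₂.1 e₁.1,
    S.laTStar.br_antisymm e₂.2 e₁.2, S.minusPairT_swap e₂ e₁, map_neg]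
  congr 1 <;> abel

lemma brCT_add_right (e₁ e₂ e₃ : At × Bt) :
    S.brCT e₁ (e₂ + e₃) = S.brCT e₁ e₂ + S.brCT e₁ e₃ := by
  simp only [brCT, Prod.fst_add, Prod.snd_add, Prod.mk_add_mk, S.laT.br_add_right,
    S.laTStar.br_add_right, S.lwT_add_left, S.lwT_add_right, S.lphiT_add_left,
    S.lphiT_add_right, S.minusPairT_add_right, map_add]
  congr 1 <;> abel

lemma brCT_add_left (e₁ e₂ e₃ : At × Bt) :
    S.brCT (e₁ + e₂) e₃ = S.brCT e₁ e₃ + S.brCT e₂ e₃ := by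
  rw [S.brCT_antisymm, S.brCT_add_right, S.brCT_antisymm e₃ e₁, S.brCT_antisymm e₃ e₂]
  abel

lemma brCT_zero_right (e : At × Bt) : S.brCT e 0 = 0 := by
  simpa using S.brCT_add_right e 0 0

lemma brCT_zero_left (e : At × Bt) : S.brCT 0 e = 0 := by
  rw [S.brCT_antisymm, S.brCT_zero_right, neg_zero]

lemma brCT_smul_right (f : R') (e₁ e₂ : At × Bt) :
    S.brCT e₁ (f • e₂) = f • S.brCT e₁ e₂
      + (S.laT.anchor e₁.1 f + S.laTStar.anchor e₁.2 f) • e₂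
      - S.plusPairT e₁ e₂ • ((S.dTStar f, S.dT f) : At × Bt) := by
  simp only [brCT, Prod.smul_fst, Prod.smul_snd, S.laT.br_leibniz, S.laTStar.br_leibniz,
    S.lwT_smul_right, S.lwT_smul_left, S.lphiT_smul_right, S.lphiT_smul_left,
    S.minusPairT_smul_right, S.dTStar_mul, S.dT_mul]
  ext
  · simp only [Prod.fst_add, Prod.fst_sub, Prod.smul_fst, S.plusPairT_eq_pairT_add_minusPairT]
    module
  · simp only [Prod.snd_add, Prod.snd_sub, Prod.smul_snd, S.plusPairT_eq_pairT_sub_minusPairT]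
    module

lemma brCT_smul_left (f : R') (e₁ e₂ : At × Bt) :
    S.brCT (f • e₁) e₂ = f • S.brCT e₁ e₂
      - (S.laT.anchor e₂.1 f + S.laTStar.anchor e₂.2 f) • e₁
      + S.plusPairT e₁ e₂ • ((S.dTStar f, S.dT f) : At × Bt) := by
  rw [S.brCT_antisymm, S.brCT_smul_right, S.brCT_antisymm e₂ e₁, S.plusPairT_comm e₂ e₁]
  module

end CourantBracket

section Embedding

lemma expNT_mul_expT : S.expNT * S.expT = 1 := by
  rw [mul_comm, S.exp_mul]

lemma laT_anchor_iotaA_iota (X : A) (f : R) :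
    S.laT.anchor (S.iotaA X) (S.iota f) = S.iota (S.la.anchor X f) := by
  simp [S.laT_anchor_iota, S.ddt_iota, S.extA_iota]

lemma laT_anchor_iotaA_expT (X : A) :
    S.laT.anchor (S.iotaA X) S.expT = S.iota (S.pair S.phi X) * S.expT := by
  simp [S.laT_anchor_iota, S.ddt_expT, S.extA_expT]

lemma laTStar_anchor_iotaB_iota (α : B) (f : R) :
    S.laTStar.anchor (S.iotaB α) (S.iota f) = S.expNT * S.iota (S.laStar.anchor α f) := by
  simp [S.laTStar_anchor_iota, S.ddt_iota, S.extB_iota]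

lemma laTStar_anchor_iotaB_expT (α : B) :
    S.laTStar.anchor (S.iotaB α) S.expT = S.iota (S.pair α S.w) := by
  have h : S.laTStar.anchor (S.iotaB α) S.expT
      = S.expNT * (S.iota (S.pair α S.w) * S.expT) := by
    simp [S.laTStar_anchor_iota, S.ddt_expT, S.extB_expT]
  rw [h]
  linear_combination S.iota (S.pair α S.w) * S.expNT_mul_expT

lemma dT_expT_mul_iota (f : R) : S.dT (S.expT * S.iota f) = S.expT • S.iotaB (S.dphiF f) := by
  refine S.eq_of_pairT_iotaA fun Z => ?_
  rw [S.dT_spec, S.pairT_smul_left, S.pairT_iota]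
  simp only [Derivation.leibniz, smul_eq_mul, S.laT_anchor_iotaA_iota, S.laT_anchor_iotaA_expT,
    dphiF, map_add, LinearMap.add_apply, map_smul, LinearMap.smul_apply, S.dd_spec, map_mul]
  ring

lemma dTStar_expT_mul_iota (f : R) : S.dTStar (S.expT * S.iota f) = S.iotaA (S.dwF f) := by
  refine S.eq_of_pairT_iotaB fun β => ?_
  rw [S.dTStar_spec, S.pairT_iota]
  simp only [S.laTStar_anchor_iota, Derivation.smul_apply, Derivation.add_apply,
    Derivation.leibniz, smul_eq_mul, S.extB_iota, S.extB_expT, S.ddt_iota, S.ddt_expT,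
    dwF, map_add, map_smul, S.ddStar_spec, map_mul]
  linear_combination (S.iota (S.laStar.anchor β f)
    + S.iota (S.pair β S.w) * S.iota f) * S.expNT_mul_expT

lemma iDT_expT_smul_iotaB (α : B) (X : A) :
    S.iDT (S.expT • S.iotaB α) (S.iotaA X) = S.expT • S.iotaB (S.iDphi α X) := by
  refine S.eq_of_pairT_iotaA fun Z => ?_
  simp only [S.iDT_spec, S.pairT_smul_left, S.pairT_iota, S.laT_br_iota,
    Derivation.leibniz, smul_eq_mul, S.laT_anchor_iotaA_iota, S.laT_anchor_iotaA_expT,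
    S.iDphi_spec, map_add, map_sub, map_mul]
  ring

lemma laTStar_br_expT_smul_iotaB (α β : B) : S.laTStar.br (S.expT • S.iotaB α) (S.iotaB β)
    = S.expT • S.laTStar.br (S.iotaB α) (S.iotaB β) - S.iota (S.pair β S.w) • S.iotaB α := by
  rw [S.laTStar.br_leibniz_left, S.laTStar_anchor_iotaB_expT]

lemma laTStar_br_expT_smul_expT_smul (α β : B) :
    S.laTStar.br (S.expT • S.iotaB α) (S.expT • S.iotaB β)
      = S.expT • S.iotaB (S.laStar.br α β) := by
  refine S.eq_of_pairT_iotaA fun Z => ?_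
  rw [S.laTStar.br_leibniz, S.laTStar_br_expT_smul_iotaB, S.laTStar_br_iota]
  simp only [map_smul, Derivation.smul_apply, smul_eq_mul, S.laTStar_anchor_iotaB_expT,
    map_add, map_sub, LinearMap.add_apply, LinearMap.sub_apply, LinearMap.smul_apply,
    S.pairT_iota]
  linear_combination (S.expT * (S.iota (S.pair (S.laStar.br α β) Z)
    + S.iota (S.pair β S.w) * S.iota (S.pair α Z)
    - S.iota (S.pair α S.w) * S.iota (S.pair β Z))) * S.expNT_mul_expT

lemma iDTStar_iotaA_expT_smul (X : A) (α : B) :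
    S.iDTStar (S.iotaA X) (S.expT • S.iotaB α) = S.iotaA (S.iDw X α) := by
  refine S.eq_of_pairT_iotaB fun β => ?_
  rw [S.iDTStar_spec, S.laTStar_br_expT_smul_iotaB, S.laTStar_br_iota]
  simp only [map_smul, Derivation.smul_apply, smul_eq_mul, S.pairT_iota,
    S.laTStar_anchor_iotaB_iota, Derivation.leibniz, S.laTStar_anchor_iotaB_expT, map_sub,
    map_add, LinearMap.sub_apply, LinearMap.add_apply, LinearMap.smul_apply, S.iDw_spec,
    map_mul]
  linear_combination (S.iota (S.laStar.anchor α (S.pair β X))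
    - S.iota (S.laStar.anchor β (S.pair α X)) - S.iota (S.pair (S.laStar.br α β) X)
    + S.iota (S.pair α S.w) * S.iota (S.pair β X)
    - S.iota (S.pair β S.w) * S.iota (S.pair α X)) * S.expNT_mul_expT

lemma lphiT_iotaA_expT_smul (X : A) (α : B) :
    S.lphiT (S.iotaA X) (S.expT • S.iotaB α) = S.expT • S.iotaB (S.lphi X α) := by
  rw [lphiT, lphi, S.pairT_smul_left, S.pairT_iota, S.dT_expT_mul_iota, S.iDT_expT_smul_iotaB,
    map_add, smul_add]

lemma lwT_expT_smul_iotaA (α : B) (X : A) :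
    S.lwT (S.expT • S.iotaB α) (S.iotaA X) = S.iotaA (S.lw α X) := by
  rw [lwT, lw, S.pairT_smul_left, S.pairT_iota, S.dTStar_expT_mul_iota,
    S.iDTStar_iotaA_expT_smul, map_add]

lemma minusPairT_emb (e₁ e₂ : A × B) :
    S.minusPairT (S.emb e₁) (S.emb e₂) = S.expT * S.iota (S.minusPair e₁ e₂) := by
  simp only [minusPairT, minusPair, emb, S.pairT_smul_left, S.pairT_iota, map_mul, map_sub,
    AlgHom.commutes]
  ring

lemma plusPairT_emb (e₁ e₂ : A × B) :
    S.plusPairT (S.emb e₁) (S.emb e₂) = S.expT * S.iota (S.plusPair e₁ e₂) := by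
  simp only [plusPairT, plusPair, emb, S.pairT_smul_left, S.pairT_iota, map_mul, map_add,
    AlgHom.commutes]
  ring

lemma brCT_emb (e₁ e₂ : A × B) : S.brCT (S.emb e₁) (S.emb e₂) = S.emb (S.brC e₁ e₂) := by
  rw [brCT, S.minusPairT_emb]
  simp only [brC, emb, S.laT_br_iota, S.lwT_expT_smul_iotaA,
    S.dTStar_expT_mul_iota, S.laTStar_br_expT_smul_expT_smul, S.lphiT_iotaA_expT_smul,
    S.dT_expT_mul_iota, map_add, map_sub, smul_add, smul_sub]

def embₛₗ : A × B →ₛₗ[(S.iota : R →+* R')] At × Bt where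
  toFun := S.emb
  map_add' e₁ e₂ := by
    simp only [emb, Prod.fst_add, Prod.snd_add, map_add, smul_add, Prod.mk_add_mk]
  map_smul' f e := by
    simp only [emb, Prod.smul_fst, Prod.smul_snd, S.iotaA_smul, S.iotaB_smul, Prod.smul_mk,
      smul_comm S.expT]
    rfl

end Embedding

section DiracStructures

variable {L : Submodule R (A × B)}

lemma emb_mem_tildeSub {e : A × B} (he : e ∈ L) : S.emb e ∈ S.tildeSub L :=
  Submodule.subset_span ⟨e, he, rfl⟩

lemma isIsotropicT_tildeSub (hL : S.IsIsotropic L) : S.IsIsotropicT (S.tildeSub L) := by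
  intro x hx y hy
  induction hx, hy using Submodule.span_induction₂ with
  | mem_mem x y hx hy =>
      obtain ⟨a, ha, rfl⟩ := hx
      obtain ⟨b, hb, rfl⟩ := hy
      rw [S.plusPairT_emb, hL a ha b hb, map_zero, mul_zero]
  | zero_left y _ => simp [plusPairT]
  | zero_right x _ => simp [plusPairT]
  | add_left x y z _ _ _ hxz hyz => rw [S.plusPairT_add_left, hxz, hyz, add_zero]
  | add_right x y z _ _ _ hxy hxz => rw [S.plusPairT_add_right, hxy, hxz, add_zero]
  | smul_left f x y _ _ hxy => rw [S.plusPairT_smul_left, hxy, mul_zero]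
  | smul_right f x y _ _ hxy => rw [S.plusPairT_smul_right, hxy, mul_zero]

lemma brCT_mem_tildeSub (hL : S.IsIsotropic L) (hclosed : ∀ e₁ ∈ L, ∀ e₂ ∈ L, S.brC e₁ e₂ ∈ L)
    {x y : At × Bt} (hx : x ∈ S.tildeSub L) (hy : y ∈ S.tildeSub L) :
    S.brCT x y ∈ S.tildeSub L := by
  have hiso := S.isIsotropicT_tildeSub hL
  induction hx, hy using Submodule.span_induction₂ with
  | mem_mem x y hx hy =>
      obtain ⟨a, ha, rfl⟩ := hx
      obtain ⟨b, hb, rfl⟩ := hy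
      rw [S.brCT_emb]
      exact S.emb_mem_tildeSub (hclosed a ha b hb)
  | zero_left y _ => simp [S.brCT_zero_left]
  | zero_right x _ => simp [S.brCT_zero_right]
  | add_left x y z _ _ _ hxz hyz => rw [S.brCT_add_left]; exact add_mem hxz hyz
  | add_right x y z _ _ _ hxy hxz => rw [S.brCT_add_right]; exact add_mem hxy hxz
  | smul_left f x y hx hy hxy =>
      rw [S.brCT_smul_left, hiso x hx y hy, zero_smul, add_zero]
      exact sub_mem (Submodule.smul_mem _ _ hxy) (Submodule.smul_mem _ _ hx)
  | smul_right f x y hx hy hxy =>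
      rw [S.brCT_smul_right, hiso x hx y hy, zero_smul, sub_zero]
      exact add_mem (Submodule.smul_mem _ _ hxy) (Submodule.smul_mem _ _ hy)

lemma isIsotropic_comap_tildeSub (hL : S.IsIsotropic L) :
    S.IsIsotropic ((S.tildeSub L).comap S.embₛₗ) := by
  intro a ha b hb
  have h := S.isIsotropicT_tildeSub hL (S.emb a) ha (S.emb b) hb
  rw [S.plusPairT_emb] at h
  refine S.iota_inj ?_
  rw [map_zero, ← one_mul (S.iota _), ← S.expNT_mul_expT, mul_assoc, h, mul_zero]

lemma mem_of_emb_mem_tildeSub (hL : S.IsMaxIsotropic L) {e : A × B}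
    (he : S.emb e ∈ S.tildeSub L) : e ∈ L := by
  have hle : L ≤ (S.tildeSub L).comap S.embₛₗ := fun a ha => S.emb_mem_tildeSub ha
  rw [← hL.2 _ (S.isIsotropic_comap_tildeSub hL.1) hle]
  exact he

end DiracStructures

end Setup

section Statements

variable {R R' A B At Bt : Type*}
    [CommRing R] [Algebra ℝ R] [CommRing R'] [Algebra ℝ R']
    [AddCommGroup A] [Module ℝ A] [Module R A] [IsScalarTower ℝ R A]
    [AddCommGroup B] [Module ℝ B] [Module R B] [IsScalarTower ℝ R B]
    [AddCommGroup At] [Module ℝ At] [Module R' At] [IsScalarTower ℝ R' At]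
    [AddCommGroup Bt] [Module ℝ Bt] [Module R' Bt] [IsScalarTower ℝ R' Bt]

/-- for sections `e₁, e₂` of a maximally isotropic subbundle `L`,
`⟦E e₁, E e₂⟧~ = E ⟦e₁, e₂⟧`; consequently `Γ(L̃)` is closed under `⟦·,·⟧~` iff
`Γ(L)` is closed under `⟦·,·⟧`. -/
theorem stmt1 (S : Setup R R' A B At Bt) (L : Submodule R (A × B))
    (hL : S.IsMaxIsotropic L) :
    (∀ e₁ ∈ L, ∀ e₂ ∈ L, S.brCT (S.emb e₁) (S.emb e₂) = S.emb (S.brC e₁ e₂)) ∧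
    ((∀ e₁ ∈ S.tildeSub L, ∀ e₂ ∈ S.tildeSub L, S.brCT e₁ e₂ ∈ S.tildeSub L) ↔
      ∀ e₁ ∈ L, ∀ e₂ ∈ L, S.brC e₁ e₂ ∈ L) := by
  refine ⟨fun e₁ _ e₂ _ => S.brCT_emb e₁ e₂, fun hT e₁ h₁ e₂ h₂ => ?_,
    fun h _ hx _ hy => S.brCT_mem_tildeSub hL.1 h hx hy⟩
  apply S.mem_of_emb_mem_tildeSub hL
  rw [← S.brCT_emb]
  exact hT _ (S.emb_mem_tildeSub h₁) _ (S.emb_mem_tildeSub h₂)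

end Statements
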